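/- For all natural numbers m and n, the normalized shifted Legendre polynomials are orthonormal on [0,1]: ∫₀¹ L_m(x) L_n(x) dx equals 1 if m = n and 0 otherwise. -/

import Mathlib

open MeasureTheory ProbabilityTheory Real Filter

/-- Classical Legendre polynomial via Rodrigues' formula. -/
noncomputable def legP (n : ℕ) (y : ℝ) : ℝ :=
  (1 / ((2 : ℝ) ^ n * (Nat.factorial n : ℝ))) *
    iteratedDeriv n (fun t : ℝ => (t ^ 2 - 1) ^ n) y

/-- Normalized shifted Legendre polynomial on [0,1]. -/
noncomputable def legL (n : ℕ) (x : ℝ) : ℝ :=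
  Real.sqrt (2 * (n : ℝ) + 1) * legP n (2 * x - 1)

/-! By Rodrigues' formula `2ⁿ n! Pₙ` is the `n`-th derivative of `(y² - 1)ⁿ`, a polynomial vanishing
to order `n` at `±1`. Hence `n` integrations by parts over `[-1, 1]` move every derivative onto the
other factor without boundary terms. Against a polynomial of degree `< n` this gives `0`; against
`2ⁿ n! Pₙ` itself it gives `(2n)! ∫ (1 - y²)ⁿ = (2n)! 2²ⁿ⁺¹ (n!)² / (2n + 1)!`, the Wallis-type integral
following from `(2n + 3) Iₙ₊₁ = (2n + 2) Iₙ`. So `∫ Pₘ Pₙ = δₘₙ 2 / (2n + 1)`, and the substitution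
`y = 2x - 1` turns this into orthonormality of the `Lₙ` on `[0, 1]`. -/

open Polynomial intervalIntegral
open scoped Nat

namespace Polynomial

theorem iteratedDeriv_eval {𝕜 : Type*} [NontriviallyNormedField 𝕜] (p : 𝕜[X]) (k : ℕ) :
    iteratedDeriv k (fun x => p.eval x) = fun x => (derivative^[k] p).eval x := by
  induction k with
  | zero => rfl
  | succ k ih =>
    rw [iteratedDeriv_succ, ih, Function.iterate_succ_apply']
    funext x
    exact Polynomial.deriv _

theorem Monic.iterate_derivative_natDegree {R : Type*} [Semiring R] {p : R[X]} (hp : p.Monic) :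
    derivative^[p.natDegree] p = C (p.natDegree ! : R) := by
  rw [eq_C_of_natDegree_le_zero ((natDegree_iterate_derivative p _).trans (Nat.sub_self _).le),
    coeff_iterate_derivative, zero_add, Nat.descFactorial_self, hp.coeff_natDegree, nsmul_one]

theorem integral_eval_mul_eval_derivative (p q : ℝ[X]) (a b : ℝ) :
    ∫ x in a..b, p.eval x * (derivative q).eval x =
      p.eval b * q.eval b - p.eval a * q.eval a -
        ∫ x in a..b, (derivative p).eval x * q.eval x :=
  integral_mul_deriv_eq_deriv_mul (fun x _ => p.hasDerivAt x) (fun x _ => q.hasDerivAt x)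
    ((derivative p).continuous.intervalIntegrable _ _)
    ((derivative q).continuous.intervalIntegrable _ _)

theorem integral_eval_mul_eval_iterate_derivative {p q : ℝ[X]} {a b : ℝ} {k : ℕ}
    (ha : (X - C a) ^ k ∣ q) (hb : (X - C b) ^ k ∣ q) :
    ∫ x in a..b, p.eval x * (derivative^[k] q).eval x =
      (-1) ^ k * ∫ x in a..b, (derivative^[k] p).eval x * q.eval x := by
  induction k generalizing q with
  | zero => simp
  | succ k ih =>
    have eval_eq_zero {c : ℝ} (hc : (X - C c) ^ (k + 1) ∣ q) : q.eval c = 0 :=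
      dvd_iff_isRoot.mp ((dvd_pow_self _ k.succ_ne_zero).trans hc)
    rw [Function.iterate_succ_apply,
      ih (by simpa using pow_sub_one_dvd_derivative_of_pow_dvd ha)
        (by simpa using pow_sub_one_dvd_derivative_of_pow_dvd hb),
      integral_eval_mul_eval_derivative, eval_eq_zero ha, eval_eq_zero hb,
      Function.iterate_succ_apply']
    ring

end Polynomial

noncomputable def rodriguesPoly (n : ℕ) : ℝ[X] := (X ^ 2 - 1) ^ n

theorem rodriguesPoly_eq (n : ℕ) : rodriguesPoly n = (X - C 1) ^ n * (X - C (-1)) ^ n := by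
  rw [rodriguesPoly, ← mul_pow, C_1, C_neg, C_1]
  ring

theorem monic_rodriguesPoly (n : ℕ) : (rodriguesPoly n).Monic := by
  have h : (X ^ 2 - 1 : ℝ[X]).Monic := by simpa using monic_X_pow_sub_C (1 : ℝ) two_ne_zero
  exact h.pow n

theorem natDegree_rodriguesPoly (n : ℕ) : (rodriguesPoly n).natDegree = 2 * n := by
  have h : (X ^ 2 - 1 : ℝ[X]).natDegree = 2 := by
    simpa using natDegree_X_pow_sub_C (n := 2) (r := (1 : ℝ))
  rw [rodriguesPoly, natDegree_pow, h, mul_comm]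

theorem eval_rodriguesPoly (n : ℕ) (y : ℝ) :
    (rodriguesPoly n).eval y = (-1) ^ n * (1 - y ^ 2) ^ n := by
  rw [rodriguesPoly, eval_pow, ← mul_pow]
  simp

theorem legP_eq_eval (n : ℕ) (y : ℝ) :
    legP n y = 1 / (2 ^ n * n !) * (derivative^[n] (rodriguesPoly n)).eval y := by
  have h : (fun t : ℝ => (t ^ 2 - 1) ^ n) = fun t => (rodriguesPoly n).eval t := by
    simp [rodriguesPoly]
  rw [legP, h, iteratedDeriv_eval]

theorem X_add_one_pow_dvd_rodriguesPoly (n : ℕ) : (X - C (-1)) ^ n ∣ rodriguesPoly n :=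
  Dvd.intro_left _ (rodriguesPoly_eq n).symm

theorem X_sub_one_pow_dvd_rodriguesPoly (n : ℕ) : (X - C 1) ^ n ∣ rodriguesPoly n :=
  Dvd.intro _ (rodriguesPoly_eq n).symm

theorem iterate_derivative_two_mul_rodriguesPoly (n : ℕ) :
    derivative^[2 * n] (rodriguesPoly n) = C ((2 * n)! : ℝ) := by
  simpa [natDegree_rodriguesPoly] using (monic_rodriguesPoly n).iterate_derivative_natDegree

theorem integral_one_sub_sq_pow_succ (n : ℕ) :
    (2 * n + 3 : ℝ) * ∫ y in (-1 : ℝ)..1, (1 - y ^ 2) ^ (n + 1) =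
      (2 * n + 2 : ℝ) * ∫ y in (-1 : ℝ)..1, (1 - y ^ 2) ^ n := by
  -- `y (1 - y²)^(n+1)` vanishes at `±1`; its derivative relates the two integrands.
  have hderiv (y : ℝ) : HasDerivAt (fun y => y * (1 - y ^ 2) ^ (n + 1))
      ((2 * n + 3) * (1 - y ^ 2) ^ (n + 1) - (2 * n + 2) * (1 - y ^ 2) ^ n) y := by
    refine ((hasDerivAt_id' y).fun_mul
      (((hasDerivAt_pow 2 y).const_sub 1).fun_pow (n + 1))).congr_deriv ?_
    push_cast
    ring
  have hcont (k : ℕ) (c : ℝ) :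
      IntervalIntegrable (fun y : ℝ => c * (1 - y ^ 2) ^ k) volume (-1) 1 :=
    (by fun_prop : Continuous fun y : ℝ => c * (1 - y ^ 2) ^ k).intervalIntegrable _ _
  have h := integral_eq_sub_of_hasDerivAt (fun y _ => hderiv y) ((hcont _ _).sub (hcont _ _))
  rw [integral_sub (hcont _ _) (hcont _ _), intervalIntegral.integral_const_mul,
    intervalIntegral.integral_const_mul] at h
  norm_num at h
  linarith

theorem integral_one_sub_sq_pow (n : ℕ) :
    ∫ y in (-1 : ℝ)..1, (1 - y ^ 2) ^ n = 2 * 4 ^ n * (n ! : ℝ) ^ 2 / (2 * n + 1)! := by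
  induction n with
  | zero => norm_num
  | succ n ih =>
    have h := integral_one_sub_sq_pow_succ n
    rw [ih] at h
    rw [eq_div_iff (by positivity), show 2 * (n + 1) + 1 = 2 * n + 1 + 1 + 1 by ring]
    simp only [Nat.factorial_succ, Nat.cast_mul, Nat.cast_succ] at h ⊢
    have : ((2 * n + 1)! : ℝ) ≠ 0 := by positivity
    field_simp at h
    linear_combination (2 * (n : ℝ) + 2) * h

theorem integral_eval_mul_eval_iterate_derivative_rodriguesPoly_of_natDegree_lt
    {p : ℝ[X]} {n : ℕ} (hp : p.natDegree < n) :
    ∫ y in (-1 : ℝ)..1, p.eval y * (derivative^[n] (rodriguesPoly n)).eval y = 0 := by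
  rw [integral_eval_mul_eval_iterate_derivative (X_add_one_pow_dvd_rodriguesPoly n)
    (X_sub_one_pow_dvd_rodriguesPoly n), iterate_derivative_eq_zero hp]
  simp

theorem integral_iterate_derivative_rodriguesPoly_mul_self (n : ℕ) :
    ∫ y in (-1 : ℝ)..1, (derivative^[n] (rodriguesPoly n)).eval y *
        (derivative^[n] (rodriguesPoly n)).eval y =
      (2 * n)! * ∫ y in (-1 : ℝ)..1, (1 - y ^ 2) ^ n := by
  rw [integral_eval_mul_eval_iterate_derivative (X_add_one_pow_dvd_rodriguesPoly n)
    (X_sub_one_pow_dvd_rodriguesPoly n), ← Function.iterate_add_apply, ← two_mul,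
    iterate_derivative_two_mul_rodriguesPoly]
  simp only [eval_C, eval_rodriguesPoly, intervalIntegral.integral_const_mul]
  have hsign : ((-1 : ℝ) ^ n) * (-1) ^ n = 1 := by rw [← mul_pow]; norm_num
  linear_combination ((2 * n)! * ∫ y in (-1 : ℝ)..1, (1 - y ^ 2) ^ n) * hsign

theorem integral_legP_mul_legP_eq (m n : ℕ) :
    ∫ y in (-1 : ℝ)..1, legP m y * legP n y =
      1 / (2 ^ m * m !) * (1 / (2 ^ n * n !)) *
        ∫ y in (-1 : ℝ)..1, (derivative^[m] (rodriguesPoly m)).eval y *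
          (derivative^[n] (rodriguesPoly n)).eval y := by
  rw [← intervalIntegral.integral_const_mul]
  congr 1
  ext y
  rw [legP_eq_eval, legP_eq_eval]
  ring

theorem integral_legP_mul_legP_of_lt {m n : ℕ} (h : m < n) :
    ∫ y in (-1 : ℝ)..1, legP m y * legP n y = 0 := by
  rw [integral_legP_mul_legP_eq,
    integral_eval_mul_eval_iterate_derivative_rodriguesPoly_of_natDegree_lt, mul_zero]
  exact (natDegree_iterate_derivative _ _).trans_lt (by rw [natDegree_rodriguesPoly]; omega)

theorem integral_legP_mul_legP_of_ne {m n : ℕ} (h : m ≠ n) :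
    ∫ y in (-1 : ℝ)..1, legP m y * legP n y = 0 := by
  rcases h.lt_or_gt with h | h
  · exact integral_legP_mul_legP_of_lt h
  · simpa only [mul_comm] using integral_legP_mul_legP_of_lt h

theorem integral_legP_mul_self (n : ℕ) :
    ∫ y in (-1 : ℝ)..1, legP n y * legP n y = 2 / (2 * n + 1) := by
  rw [integral_legP_mul_legP_eq, integral_iterate_derivative_rodriguesPoly_mul_self,
    integral_one_sub_sq_pow, Nat.factorial_succ, show (4 : ℝ) ^ n = 2 ^ n * 2 ^ n by
      rw [← mul_pow]; norm_num]
  push_cast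
  field_simp

/-- The normalized shifted Legendre polynomials are orthonormal on [0,1]. -/
theorem legendre_orthonormal (m n : ℕ) :
    ∫ x in (0 : ℝ)..1, legL m x * legL n x = if m = n then 1 else 0 := by
  have hshift : ∫ x in (0 : ℝ)..1, legL m x * legL n x =
      √(2 * m + 1) * √(2 * n + 1) / 2 * ∫ y in (-1 : ℝ)..1, legP m y * legP n y := by
    calc ∫ x in (0 : ℝ)..1, legL m x * legL n x
        = ∫ x in (0 : ℝ)..1,
            √(2 * m + 1) * √(2 * n + 1) * (legP m (2 * x - 1) * legP n (2 * x - 1)) := by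
          congr 1; ext x; simp only [legL]; ring
      _ = _ := by
          rw [intervalIntegral.integral_const_mul,
            integral_comp_mul_sub (fun y => legP m y * legP n y) two_ne_zero]
          norm_num
          ring
  rw [hshift]
  split_ifs with h
  · subst h
    rw [integral_legP_mul_self, ← sq, sq_sqrt (by positivity)]
    field_simp
  · rw [integral_legP_mul_legP_of_ne h, mul_zero]
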